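/- For every subset B ⊆ A and all traces u, v, w over a dependency alphabet: if uw ⊑ view_B(uv), then w ⊑ view_B(v). -/

import Mathlib

namespace MazTrace

variable {A : Type*}

/-- Smallest equivalence on words over `A` generated by commuting two adjacent
independent letters (`a I b` iff `¬ D a b`). -/
inductive TraceRel (D : A → A → Prop) : List A → List A → Prop
  | refl (u : List A) : TraceRel D u u
  | swap (u v : List A) (a b : A) (h : ¬ D a b) :
      TraceRel D (u ++ a :: b :: v) (u ++ b :: a :: v)
  | symm {u v : List A} : TraceRel D u v → TraceRel D v u
  | trans {u v w : List A} : TraceRel D u v → TraceRel D v w → TraceRel D u w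

theorem TraceRel.append_right {D : A → A → Prop} {u u' : List A} (w : List A)
    (h : TraceRel D u u') : TraceRel D (u ++ w) (u' ++ w) := by
  induction h with
  | refl u => exact .refl _
  | swap x y a b hab =>
      simpa [List.append_assoc] using TraceRel.swap (D := D) x (y ++ w) a b hab
  | symm _ ih => exact ih.symm
  | trans _ _ ih1 ih2 => exact ih1.trans ih2

theorem TraceRel.append_left {D : A → A → Prop} {v v' : List A} (w : List A)
    (h : TraceRel D v v') : TraceRel D (w ++ v) (w ++ v') := by
  induction h with
  | refl u => exact .refl _
  | swap x y a b hab =>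
      simpa [List.append_assoc] using TraceRel.swap (D := D) (w ++ x) y a b hab
  | symm _ ih => exact ih.symm
  | trans _ _ ih1 ih2 => exact ih1.trans ih2

def traceSetoid (D : A → A → Prop) : Setoid (List A) :=
  ⟨TraceRel D, ⟨TraceRel.refl, TraceRel.symm, TraceRel.trans⟩⟩

/-- A Mazurkiewicz trace: an equivalence class of words. -/
def Trace (D : A → A → Prop) : Type _ := Quotient (traceSetoid D)

namespace Trace

variable {D : A → A → Prop}

/-- The trace of a word. -/
def mk (D : A → A → Prop) (u : List A) : Trace D := Quotient.mk (traceSetoid D) u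

/-- The empty trace. -/
instance : One (Trace D) := ⟨mk D []⟩

/-- Concatenation of traces, induced by concatenation of words. -/
instance : Mul (Trace D) :=
  ⟨fun s t => Quotient.liftOn₂ s t (fun u v => mk D (u ++ v))
    (fun _ _ _ _ hu hv =>
      Quotient.sound ((hu.append_right _).trans (TraceRel.append_left _ hv)))⟩

instance : Nonempty (Trace D) := ⟨1⟩

/-- Length of a trace: the length of any of its linearizations. -/
def length (t : Trace D) : ℕ :=
  Quotient.liftOn t List.length (by
    intro u v h
    induction h with
    | refl u => rfl
    | swap x y a b hab => simp
    | symm _ ih => exact ih.symm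
    | trans _ _ ih1 ih2 => exact ih1.trans ih2)

/-- The set of letters of a trace. -/
def alph (t : Trace D) : Set A :=
  Quotient.liftOn t (fun u => {a | a ∈ u}) (by
    intro u v h
    induction h with
    | refl u => rfl
    | swap x y a b hab => ext c; simp [List.mem_append]; tauto
    | symm _ ih => exact ih.symm
    | trans _ _ ih1 ih2 => exact ih1.trans ih2)

/-- Prefix order on traces: `s ⊑ t` iff `s * w = t` for some trace `w`. -/
def Prefix (s t : Trace D) : Prop := ∃ w, s * w = t

/-- `t I B` : every letter of the trace `t` is independent of every element of `B`. -/
def IndepSet (t : Trace D) (B : Set A) : Prop := ∀ a ∈ t.alph, ∀ b ∈ B, ¬ D a b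

/-- `s I t` : every letter of `s` is independent of every letter of `t`. -/
def Indep (s t : Trace D) : Prop := ∀ a ∈ s.alph, ∀ b ∈ t.alph, ¬ D a b

/-- `a I t` : the letter `a` is independent of every letter of the trace `t`. -/
def IndepLetter (a : A) (t : Trace D) : Prop := ∀ c ∈ t.alph, ¬ D a c

/-- `w` is the `B`-view of `t`: the shortest prefix of `t` such that `t = w·v`
for some trace `v` with `v I B`. -/
def IsView (B : Set A) (t w : Trace D) : Prop :=
  (∃ v, w * v = t ∧ v.IndepSet B) ∧
  ∀ w' v', w' * v' = t → v'.IndepSet B → w.length ≤ w'.length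

/-- The `B`-view of a trace. -/
noncomputable def view (B : Set A) (t : Trace D) : Trace D :=
  Classical.epsilon (IsView B t)

/-- A trace is `B`-prime if every linearization of it ends with a letter of `B`. -/
def IsBPrime (B : Set A) (t : Trace D) : Prop :=
  ∀ u : List A, mk D u = t → ∀ a : A, u.getLast? = some a → a ∈ B

/-- A trace is prime if all its linearizations have the same last letter
(the empty trace counts as prime). -/
def IsPrime (t : Trace D) : Prop :=
  ∀ u v : List A, mk D u = t → mk D v = t → u.getLast? = v.getLast?

end Trace

end MazTrace

/-!
The `B`-view `m` of `t` is not only the shortest prefix with `t = m·r`, `r I B`: it is the least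
one for the prefix order. If `t = p·a·q` with `a·q I B`, induction on `q` gives `m ⊑ p·a`, and
Levi's lemma leaves two cases: `m ⊑ p`, or `m = x·a` and then `t = x·(a·r)` with `a·r I B`,
contradicting the minimal length of `m`. Since `uv = u·view_B(v)·r` with `r I B`, this gives
`view_B(uv) ⊑ u·view_B(v)`, hence `uw ⊑ u·view_B(v)`, and `u` cancels: trace monoids are
cancellative, as one sees by projecting words onto pairs of dependent letters.
-/

namespace MazTrace

variable {A : Type*} {D : A → A → Prop}

/-- `TraceRel D` commutes two letters exactly when they are not `Dep D`-related: a swap can be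
undone, and swapping equal letters does nothing. -/
def Dep (D : A → A → Prop) (a b : A) : Prop := a = b ∨ D a b ∧ D b a

theorem TraceRel.swap_of_not_dep (u v : List A) {a b : A} (h : ¬ Dep D a b) :
    TraceRel D (u ++ a :: b :: v) (u ++ b :: a :: v) := by
  by_cases hab : D a b
  · exact (TraceRel.swap u v b a fun hba => h (.inr ⟨hab, hba⟩)).symm
  · exact .swap u v a b hab

theorem TraceRel.cons_append_singleton {a : A} {z : List A} (hz : ∀ c ∈ z, ¬ Dep D a c) :
    TraceRel D (a :: z) (z ++ [a]) := by
  induction z with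
  | nil => exact .refl _
  | cons c z ih =>
    have hc : TraceRel D (a :: c :: z) (c :: a :: z) :=
      TraceRel.swap_of_not_dep [] z (hz c List.mem_cons_self)
    exact hc.trans <| TraceRel.append_left [c] <| ih fun d hd => hz d (List.mem_cons_of_mem c hd)

section Projection

variable [DecidableEq A]

def proj (a b : A) (u : List A) : List A := u.filter fun x => x = a ∨ x = b

theorem proj_append (a b : A) (u v : List A) : proj a b (u ++ v) = proj a b u ++ proj a b v :=
  List.filter_append ..

theorem proj_reverse (a b : A) (u : List A) : proj a b u.reverse = (proj a b u).reverse :=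
  List.filter_reverse

theorem proj_cons_self_left (a b : A) (u : List A) : proj a b (a :: u) = a :: proj a b u := by
  simp [proj]

theorem TraceRel.proj_eq {u v : List A} (h : TraceRel D u v) {a b : A} (hab : Dep D a b) :
    proj a b u = proj a b v := by
  induction h with
  | refl => rfl
  | swap x y c d hcd =>
    simp only [proj_append, List.append_cancel_left_eq]
    by_cases hc : c = a ∨ c = b <;> by_cases hd : d = a ∨ d = b <;> simp [proj, hc, hd]
    have hcd' : c = d := by rcases hab with rfl | ⟨hab, hba⟩ <;> grind
    exact ⟨hcd', hcd'.symm⟩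
  | symm _ ih => exact ih.symm
  | trans _ _ ih₁ ih₂ => exact ih₁.trans ih₂

theorem exists_eq_append_cons_of_head?_proj {c : A} {v : List A}
    (h : ∀ d, Dep D c d → (proj c d v).head? = some c) :
    ∃ y z, v = y ++ c :: z ∧ ∀ d ∈ y, ¬ Dep D c d := by
  induction v with
  | nil => simpa [proj] using h c (.inl rfl)
  | cons e v ih =>
    by_cases hec : e = c
    · exact ⟨[], v, by rw [hec]; rfl, by simp⟩
    have hce : ¬ Dep D c e := fun hce => by simpa [proj, hec] using h e hce
    obtain ⟨y, z, rfl, hy⟩ := ih fun d hcd => by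
      have hed : e ≠ d := by rintro rfl; exact hce hcd
      simpa [proj, hec, hed] using h d hcd
    exact ⟨e :: y, z, rfl, by simpa [hce] using hy⟩

theorem traceRel_of_proj_eq {u v : List A} (h : ∀ a b, Dep D a b → proj a b u = proj a b v) :
    TraceRel D u v := by
  induction u generalizing v with
  | nil =>
    have : v = [] := List.eq_nil_iff_forall_not_mem.2 fun c hc =>
      List.filter_eq_nil_iff.1 (h c c (.inl rfl)).symm c hc (by simp)
    exact this ▸ .refl _
  | cons c u ih =>
    obtain ⟨y, z, rfl, hy⟩ := exists_eq_append_cons_of_head?_proj fun d hcd => by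
      rw [← h c d hcd, proj_cons_self_left]; rfl
    have hv : TraceRel D (c :: (y ++ z)) (y ++ c :: z) := by
      simpa using TraceRel.append_right z (TraceRel.cons_append_singleton hy)
    refine TraceRel.append_left [c] (ih (v := y ++ z) fun a b hab => ?_) |>.trans hv
    have hc : proj a b ([c] ++ u) = proj a b ([c] ++ (y ++ z)) :=
      (h a b hab).trans (hv.proj_eq hab).symm
    rw [proj_append, proj_append] at hc
    exact List.append_cancel_left hc

end Projection

theorem traceRel_iff_proj_eq [DecidableEq A] {u v : List A} :
    TraceRel D u v ↔ ∀ a b, Dep D a b → proj a b u = proj a b v :=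
  ⟨fun h _ _ hab => h.proj_eq hab, traceRel_of_proj_eq⟩

theorem TraceRel.cancel_left {x y z : List A} (h : TraceRel D (x ++ y) (x ++ z)) :
    TraceRel D y z := by
  classical
  exact traceRel_iff_proj_eq.2 fun a b hab => by simpa [proj_append] using h.proj_eq hab

theorem TraceRel.cancel_right {x y z : List A} (h : TraceRel D (x ++ z) (y ++ z)) :
    TraceRel D x y := by
  classical
  exact traceRel_iff_proj_eq.2 fun a b hab => by simpa [proj_append] using h.proj_eq hab

theorem TraceRel.exists_eq_append_cons {u w : List A} {a : A} (h : TraceRel D (u ++ [a]) w) :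
    ∃ w₁ w₂, w = w₁ ++ a :: w₂ ∧ (∀ c ∈ w₂, ¬ Dep D a c) ∧ TraceRel D u (w₁ ++ w₂) := by
  classical
  obtain ⟨y, z, hw, hy⟩ := exists_eq_append_cons_of_head?_proj (D := D) (c := a) (v := w.reverse)
    fun d had => by
      rw [proj_reverse, List.head?_reverse, ← h.proj_eq had, proj_append]
      simp [proj]
  have hw : w = z.reverse ++ a :: y.reverse := by simpa using congrArg List.reverse hw
  have hya : ∀ c ∈ y.reverse, ¬ Dep D a c := by simpa using hy
  refine ⟨z.reverse, y.reverse, hw, hya, TraceRel.cancel_right (z := [a]) ?_⟩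
  subst hw
  simpa using h.trans (TraceRel.append_left z.reverse (TraceRel.cons_append_singleton hya))

namespace Trace

theorem mk_mul_mk (u v : List A) : mk D u * mk D v = mk D (u ++ v) := rfl

theorem mk_eq_mk {u v : List A} : mk D u = mk D v ↔ TraceRel D u v := Quotient.eq

theorem exists_mk (t : Trace D) : ∃ u, mk D u = t := Quotient.exists_rep t

theorem one_def : (1 : Trace D) = mk D [] := rfl

theorem length_mk (u : List A) : (mk D u).length = u.length := rfl

theorem indepSet_mk {u : List A} {B : Set A} :
    (mk D u).IndepSet B ↔ ∀ a ∈ u, ∀ b ∈ B, ¬ D a b := Iff.rfl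

protected theorem mul_assoc (s t r : Trace D) : s * t * r = s * (t * r) := by
  obtain ⟨x, rfl⟩ := exists_mk s
  obtain ⟨y, rfl⟩ := exists_mk t
  obtain ⟨z, rfl⟩ := exists_mk r
  simp [mk_mul_mk]

protected theorem mul_one (t : Trace D) : t * 1 = t := by
  obtain ⟨x, rfl⟩ := exists_mk t
  simp [one_def, mk_mul_mk]

protected theorem mul_left_cancel {s t r : Trace D} (h : s * t = s * r) : t = r := by
  obtain ⟨x, rfl⟩ := exists_mk s
  obtain ⟨y, rfl⟩ := exists_mk t
  obtain ⟨z, rfl⟩ := exists_mk r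
  exact mk_eq_mk.2 (mk_eq_mk.1 h).cancel_left

theorem length_mul (s t : Trace D) : (s * t).length = s.length + t.length := by
  obtain ⟨x, rfl⟩ := exists_mk s
  obtain ⟨y, rfl⟩ := exists_mk t
  simp [mk_mul_mk, length_mk]

theorem indepSet_mul {s t : Trace D} {B : Set A} :
    (s * t).IndepSet B ↔ s.IndepSet B ∧ t.IndepSet B := by
  obtain ⟨x, rfl⟩ := exists_mk s
  obtain ⟨y, rfl⟩ := exists_mk t
  simp only [mk_mul_mk, indepSet_mk, List.forall_mem_append]

theorem one_indepSet (B : Set A) : (1 : Trace D).IndepSet B := by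
  simp [one_def, indepSet_mk]

theorem levi_singleton {x y z : Trace D} {a : A} (h : x * y = z * mk D [a]) :
    (∃ y', y = y' * mk D [a] ∧ z = x * y') ∨ ∃ x', x = x' * mk D [a] := by
  obtain ⟨xu, rfl⟩ := exists_mk x
  obtain ⟨yu, rfl⟩ := exists_mk y
  obtain ⟨zu, rfl⟩ := exists_mk z
  obtain ⟨w₁, w₂, hw, hw₂, hz⟩ := (mk_eq_mk.1 h).symm.exists_eq_append_cons
  have hcomm {p : List A} (hp : ∀ c ∈ p, ¬ Dep D a c) (q : List A) :
      mk D (q ++ a :: p) = mk D (q ++ p) * mk D [a] := by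
    simpa [mk_mul_mk] using mk_eq_mk.2 (TraceRel.append_left q (TraceRel.cons_append_singleton hp))
  rcases List.append_eq_append_iff.1 hw with ⟨s, rfl, rfl⟩ | ⟨s, rfl, hs⟩
  · exact .inl ⟨mk D (s ++ w₂), hcomm hw₂ s, by simpa [mk_mul_mk] using mk_eq_mk.2 hz⟩
  rcases List.cons_eq_append_iff.1 hs with ⟨rfl, rfl⟩ | ⟨s, rfl, rfl⟩
  · exact .inl ⟨mk D w₂, hcomm hw₂ [], by simpa [mk_mul_mk] using mk_eq_mk.2 hz⟩
  · exact .inr ⟨mk D (w₁ ++ s), hcomm (fun c hc => hw₂ c (List.mem_append_left _ hc)) w₁⟩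

theorem Prefix.trans {s t r : Trace D} (hst : s.Prefix t) (htr : t.Prefix r) : s.Prefix r := by
  obtain ⟨p, rfl⟩ := hst
  obtain ⟨q, rfl⟩ := htr
  exact ⟨p * q, (Trace.mul_assoc s p q).symm⟩

theorem Prefix.cancel_left {s t r : Trace D} (h : (s * t).Prefix (s * r)) : t.Prefix r := by
  obtain ⟨p, hp⟩ := h
  exact ⟨p, Trace.mul_left_cancel (by rw [← Trace.mul_assoc, hp])⟩

theorem exists_isView (B : Set A) (t : Trace D) : ∃ m, IsView B t m := by
  obtain ⟨m, ⟨r, hmr, hr⟩, hmin⟩ := (measure (length (D := D))).wf.has_min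
    {m | ∃ r, m * r = t ∧ r.IndepSet B} ⟨t, 1, Trace.mul_one t, one_indepSet B⟩
  exact ⟨m, ⟨r, hmr, hr⟩, fun w' v' hw hv => not_lt.1 (hmin w' ⟨v', hw, hv⟩)⟩

theorem isView_view (B : Set A) (t : Trace D) : IsView B t (view B t) :=
  Classical.epsilon_spec (exists_isView B t)

theorem IsView.prefix_of_mul_eq {B : Set A} {t m : Trace D} (hm : IsView B t m)
    {p q : Trace D} (hpq : p * q = t) (hq : q.IndepSet B) : m.Prefix p := by
  obtain ⟨ql, rfl⟩ := exists_mk q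
  induction ql generalizing p with
  | nil =>
    rw [← one_def, Trace.mul_one] at hpq
    exact hpq ▸ hm.1.imp fun _ h => h.1
  | cons a ql ih =>
    obtain ⟨haB, hqB⟩ := (indepSet_mul (s := mk D [a]) (t := mk D ql)).1 hq
    obtain ⟨s, hs⟩ := ih (p := p * mk D [a]) (by rwa [Trace.mul_assoc]) hqB
    rcases levi_singleton hs with ⟨s', -, hp⟩ | ⟨x, rfl⟩
    · exact ⟨s', hp.symm⟩
    · obtain ⟨r, hr, hrB⟩ := hm.1
      have := hm.2 x (mk D [a] * r) (by rwa [← Trace.mul_assoc]) (indepSet_mul.2 ⟨haB, hrB⟩)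
      simp [length_mul, length_mk] at this

theorem view_prefix_mul_view (B : Set A) (u v : Trace D) :
    (view B (u * v)).Prefix (u * view B v) := by
  obtain ⟨r, hr, hrB⟩ := (isView_view B v).1
  exact (isView_view B (u * v)).prefix_of_mul_eq (by rw [Trace.mul_assoc, hr]) hrB

end Trace

end MazTrace

open MazTrace in
theorem prefix_view_cancel_general {A : Type*} (D : A → A → Prop)
    (B : Set A) (u v w : Trace D)
    (h : (u * w).Prefix (Trace.view B (u * v))) : w.Prefix (Trace.view B v) :=
  (h.trans (Trace.view_prefix_mul_view B u v)).cancel_left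

open MazTrace in
/-- If `uw ⊑ view_B(uv)` then `w ⊑ view_B(v)`. -/
theorem prefix_view_cancel {A : Type*} [Finite A] (D : A → A → Prop)
    (hrefl : ∀ a, D a a) (hsymm : ∀ a b, D a b → D b a)
    (B : Set A) (u v w : Trace D)
    (h : (u * w).Prefix (Trace.view B (u * v))) : w.Prefix (Trace.view B v) :=
  prefix_view_cancel_general D B u v w h
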